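/- Assume the rainbow-subgraph setup: c is an edge-coloring of the complete graph K_n containing no rainbow copy of (t+2)K_3 (t ≥ 0); G is a spanning subgraph of K_n that is rainbow under c and contains exactly one edge of every color used by c; M is a family of t+1 pairwise vertex-disjoint triangles in G; D is the induced subgraph of G on the vertices not covered by M; and X is a set of vertices of D that is independent in D such that any two distinct vertices of X have at least 4 common neighbors in D. Suppose (x,y,z) is a triangle of M and T ⊆ X with |T| ≥ 4 satisfies c(uv) = c(xy) for all distinct u, v ∈ T. Then no vertex of D is adjacent in G to both x and z, and no vertex of D is adjacent in G to both y and z. -/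
import Mathlib


/-- `G` contains `k` pairwise vertex-disjoint triangles whose `3k` edges receive pairwise
distinct colors under `c`: a rainbow copy of `k·K₃`. -/
def RainbowIndepTrianglesIn {V : Type*} (G : SimpleGraph V) (k : ℕ)
    (c : Sym2 V → ℕ) : Prop :=
  ∃ f : Fin k → Fin 3 → V,
    Function.Injective (fun p : Fin k × Fin 3 => f p.1 p.2) ∧
    (∀ i, G.Adj (f i 0) (f i 1) ∧ G.Adj (f i 1) (f i 2) ∧ G.Adj (f i 0) (f i 2)) ∧
    Function.Injective (fun p : Fin k × Fin 3 => c s(f p.1 p.2, f p.1 (p.2 + 1)))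

private lemma edgeInj {V : Type*} {k : ℕ} (g : Fin k → Fin 3 → V)
    (hg : Function.Injective fun q : Fin k × Fin 3 => g q.1 q.2) :
    Function.Injective fun q : Fin k × Fin 3 => s(g q.1 q.2, g q.1 (q.2 + 1)) := by
  rintro ⟨k1, m1⟩ ⟨k2, m2⟩ h
  simp only [Sym2.eq_iff] at h
  rcases h with ⟨h1, h2⟩ | ⟨h1, h2⟩
  · exact @hg (k1, m1) (k2, m2) h1
  · have e1 := @hg (k1, m1) (k2, m2 + 1) h1
    have e2 := @hg (k1, m1 + 1) (k2, m2) h2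
    simp only [Prod.mk.injEq] at e1 e2
    obtain ⟨hk, hm1⟩ := e1
    obtain ⟨-, hm2⟩ := e2
    exfalso
    subst hk hm1
    revert hm2
    fin_cases m2 <;> decide

private lemma triAdj {V : Type*} {G : SimpleGraph V} {g : Fin 3 → V}
    (h : G.Adj (g 0) (g 1) ∧ G.Adj (g 1) (g 2) ∧ G.Adj (g 0) (g 2)) :
    ∀ a b : Fin 3, a ≠ b → G.Adj (g a) (g b) := by
  obtain ⟨h1, h2, h3⟩ := h
  intro a b hab
  fin_cases a <;> fin_cases b <;>
    first
      | exact absurd rfl hab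
      | exact h1 | exact h2 | exact h3
      | exact h1.symm | exact h2.symm | exact h3.symm

private lemma aux_claim (t n : ℕ) (c : Sym2 (Fin n) → ℕ)
    (hnoRainbow : ¬ RainbowIndepTrianglesIn (⊤ : SimpleGraph (Fin n)) (t + 2) c)
    (G : SimpleGraph (Fin n))
    (hGrainbow : ∀ e ∈ G.edgeSet, ∀ e' ∈ G.edgeSet, c e = c e' → e = e')
    (f : Fin (t + 1) → Fin 3 → Fin n)
    (hinj : Function.Injective fun p : Fin (t + 1) × Fin 3 => f p.1 p.2)
    (htri : ∀ i, G.Adj (f i 0) (f i 1) ∧ G.Adj (f i 1) (f i 2) ∧ G.Adj (f i 0) (f i 2))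
    (Dset : Set (Fin n)) (hDset : Dset = {x | ∀ i j, f i j ≠ x})
    (i : Fin (t + 1)) (y : Fin n) (jx : Fin 3)
    (hxy : s(f i jx, y) ∈ G.edgeSet)
    (w : Fin n) (jp jz : Fin 3) (hjpz : jp ≠ jz)
    (hw : w ∈ Dset) (hwp : G.Adj w (f i jp)) (hwz : G.Adj w (f i jz))
    (hne1 : s(w, f i jp) ≠ s(f i jx, y))
    (hne2 : s(f i jp, f i jz) ≠ s(f i jx, y))
    (hne3 : s(f i jz, w) ≠ s(f i jx, y))
    (T : Set (Fin n)) (hTD : T ⊆ Dset) (hTcard : 4 ≤ T.ncard)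
    (hTcn : ∀ u ∈ T, ∀ v ∈ T, u ≠ v →
      4 ≤ (G.neighborSet u ∩ G.neighborSet v ∩ Dset).ncard)
    (hTc : ∀ u ∈ T, ∀ v ∈ T, u ≠ v → c s(u, v) = c s(f i jx, y)) : False := by
  classical
  -- membership in Dset means not an M-vertex
  have hDmem : ∀ a ∈ Dset, ∀ (i' : Fin (t+1)) (j' : Fin 3), a ≠ f i' j' := by
    intro a ha i' j'
    rw [hDset] at ha
    exact (ha i' j').symm
  -- removing one point drops ncard by at most one
  have hdiff : ∀ (s : Set (Fin n)) (a : Fin n), s.ncard ≤ (s \ {a}).ncard + 1 := by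
    intro s a
    by_cases h : a ∈ s
    · exact le_of_eq (Set.ncard_diff_singleton_add_one h).symm
    · rw [Set.diff_singleton_eq_self h]; exact Nat.le_succ _
  -- pick u v ∈ T distinct, both ≠ w
  have h2 : 1 < (T \ {w}).ncard := by have := hdiff T w; omega
  obtain ⟨u, v, hu, hv, huv⟩ := (Set.one_lt_ncard_iff (Set.toFinite _)).mp h2
  obtain ⟨huT, huw⟩ := hu
  obtain ⟨hvT, hvw⟩ := hv
  rw [Set.mem_singleton_iff] at huw hvw
  -- pick a common neighbor d of u v in Dset with d ≠ w
  have hN4 := hTcn u huT v hvT huv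
  have hNne : ((G.neighborSet u ∩ G.neighborSet v ∩ Dset) \ {w}).Nonempty := by
    apply Set.nonempty_of_ncard_ne_zero
    have := hdiff (G.neighborSet u ∩ G.neighborSet v ∩ Dset) w
    omega
  obtain ⟨d, hdN, hdw⟩ := hNne
  rw [Set.mem_singleton_iff] at hdw
  obtain ⟨⟨hdu, hdv⟩, hdD⟩ := hdN
  have hdu' : G.Adj u d := hdu
  have hdv' : G.Adj v d := hdv
  have huD := hTD huT
  have hvD := hTD hvT
  have huvd : u ≠ d := hdu'.ne
  have hvd : v ≠ d := hdv'.ne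
  have hwp' : w ≠ f i jp := by rw [hDset] at hw; exact (hw i jp).symm
  have hwz' : w ≠ f i jz := by rw [hDset] at hw; exact (hw i jz).symm
  have hpz : f i jp ≠ f i jz := fun e => hjpz (congrArg Prod.snd (@hinj (i, jp) (i, jz) e))
  -- the new family of t+2 triangles
  obtain ⟨g, hgcast, hglast⟩ :
      ∃ g : Fin (t + 2) → Fin 3 → Fin n,
        (∀ (j : Fin (t + 1)) (m : Fin 3),
          g j.castSucc m = if j = i then ![w, f i jp, f i jz] m else f j m) ∧
        (∀ m : Fin 3, g (Fin.last (t + 1)) m = ![u, v, d] m) := by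
    refine ⟨Fin.snoc (Function.update f i ![w, f i jp, f i jz]) ![u, v, d], ?_, ?_⟩
    · intro j m
      rw [Fin.snoc_castSucc, Function.update_apply]
      by_cases h : j = i
      · rw [if_pos h, if_pos h]
      · rw [if_neg h, if_neg h]
    · intro m
      rw [Fin.snoc_last]
  -- vertex injectivity
  have key : ∀ (k1 : Fin (t + 2)) (m1 : Fin 3) (k2 : Fin (t + 2)) (m2 : Fin 3),
      g k1 m1 = g k2 m2 → k1 = k2 ∧ m1 = m2 := by
    intro k1 m1 k2 m2 h
    rcases Fin.eq_castSucc_or_eq_last k1 with ⟨j1, rfl⟩ | rfl <;>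
      rcases Fin.eq_castSucc_or_eq_last k2 with ⟨j2, rfl⟩ | rfl
    · rw [hgcast, hgcast] at h
      by_cases e1 : j1 = i <;> by_cases e2 : j2 = i
      · rw [if_pos e1, if_pos e2] at h
        refine ⟨by rw [e1, e2], ?_⟩
        fin_cases m1 <;> fin_cases m2 <;>
          first
            | rfl
            | exact absurd h hwp'
            | exact absurd h hwz'
            | exact absurd h hpz
            | exact absurd h hwp'.symm
            | exact absurd h hwz'.symm
            | exact absurd h hpz.symm
      · exfalso
        rw [if_pos e1, if_neg e2] at h
        fin_cases m1 <;>
          first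
            | exact hDmem w hw j2 m2 h
            | exact e2 (congrArg Prod.fst (@hinj (i, jp) (j2, m2) h)).symm
            | exact e2 (congrArg Prod.fst (@hinj (i, jz) (j2, m2) h)).symm
      · exfalso
        rw [if_neg e1, if_pos e2] at h
        replace h := h.symm
        fin_cases m2 <;>
          first
            | exact hDmem w hw j1 m1 h
            | exact e1 (congrArg Prod.fst (@hinj (i, jp) (j1, m1) h)).symm
            | exact e1 (congrArg Prod.fst (@hinj (i, jz) (j1, m1) h)).symm
      · rw [if_neg e1, if_neg e2] at h
        have := @hinj (j1, m1) (j2, m2) h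
        rw [Prod.mk.injEq] at this
        exact ⟨congrArg Fin.castSucc this.1, this.2⟩
    · exfalso
      rw [hgcast, hglast] at h
      by_cases e1 : j1 = i
      · rw [if_pos e1] at h
        fin_cases m1 <;> fin_cases m2 <;>
          first
            | exact huw h.symm
            | exact hvw h.symm
            | exact hdw h.symm
            | exact hDmem u huD i jp h.symm
            | exact hDmem u huD i jz h.symm
            | exact hDmem v hvD i jp h.symm
            | exact hDmem v hvD i jz h.symm
            | exact hDmem d hdD i jp h.symm
            | exact hDmem d hdD i jz h.symm
      · rw [if_neg e1] at h
        fin_cases m2 <;>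
          first
            | exact hDmem u huD j1 m1 h.symm
            | exact hDmem v hvD j1 m1 h.symm
            | exact hDmem d hdD j1 m1 h.symm
    · exfalso
      rw [hglast, hgcast] at h
      replace h := h.symm
      by_cases e2 : j2 = i
      · rw [if_pos e2] at h
        fin_cases m2 <;> fin_cases m1 <;>
          first
            | exact huw h.symm
            | exact hvw h.symm
            | exact hdw h.symm
            | exact hDmem u huD i jp h.symm
            | exact hDmem u huD i jz h.symm
            | exact hDmem v hvD i jp h.symm
            | exact hDmem v hvD i jz h.symm
            | exact hDmem d hdD i jp h.symm
            | exact hDmem d hdD i jz h.symm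
      · rw [if_neg e2] at h
        fin_cases m1 <;>
          first
            | exact hDmem u huD j2 m2 h.symm
            | exact hDmem v hvD j2 m2 h.symm
            | exact hDmem d hdD j2 m2 h.symm
    · rw [hglast, hglast] at h
      refine ⟨rfl, ?_⟩
      fin_cases m1 <;> fin_cases m2 <;>
        first
          | rfl
          | exact absurd h huv
          | exact absurd h huvd
          | exact absurd h hvd
          | exact absurd h huv.symm
          | exact absurd h huvd.symm
          | exact absurd h hvd.symm
  have hVinj : Function.Injective fun q : Fin (t + 2) × Fin 3 => g q.1 q.2 := by
    rintro ⟨k1, m1⟩ ⟨k2, m2⟩ h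
    obtain ⟨hk, hm⟩ := key k1 m1 k2 m2 h
    rw [hk, hm]
  have hpadj : G.Adj (f i jp) (f i jz) := triAdj (htri i) jp jz hjpz
  have hvne : ∀ (k : Fin (t + 2)) (m1 m2 : Fin 3), m1 ≠ m2 → g k m1 ≠ g k m2 := by
    intro k m1 m2 hm he
    exact hm (key k m1 k m2 he).2
  have hTopAdj : ∀ k, (⊤ : SimpleGraph (Fin n)).Adj (g k 0) (g k 1) ∧
      (⊤ : SimpleGraph (Fin n)).Adj (g k 1) (g k 2) ∧
      (⊤ : SimpleGraph (Fin n)).Adj (g k 0) (g k 2) := by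
    intro k
    refine ⟨?_, ?_, ?_⟩ <;> rw [SimpleGraph.top_adj] <;> apply hvne <;> decide
  have hGedge : ∀ (k : Fin (t + 2)) (m : Fin 3),
      ((k, m) : Fin (t + 2) × Fin 3) ≠ (Fin.last (t + 1), (0 : Fin 3)) →
      s(g k m, g k (m + 1)) ∈ G.edgeSet ∧ s(g k m, g k (m + 1)) ≠ s(f i jx, y) := by
    intro k m hkm
    rcases Fin.eq_castSucc_or_eq_last k with ⟨j, rfl⟩ | rfl
    · rw [hgcast, hgcast]
      by_cases e : j = i
      · rw [if_pos e, if_pos e]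
        fin_cases m
        · exact ⟨G.mem_edgeSet.mpr hwp, hne1⟩
        · exact ⟨G.mem_edgeSet.mpr hpadj, hne2⟩
        · exact ⟨G.mem_edgeSet.mpr hwz.symm, hne3⟩
      · rw [if_neg e, if_neg e]
        have hedgene : ∀ (m1 m2 : Fin 3), s(f j m1, f j m2) ≠ s(f i jx, y) := by
          intro m1 m2 he
          rw [Sym2.eq_iff] at he
          rcases he with ⟨ha, -⟩ | ⟨-, ha⟩
          · exact e (congrArg Prod.fst (@hinj (j, m1) (i, jx) ha))
          · exact e (congrArg Prod.fst (@hinj (j, m2) (i, jx) ha))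
        fin_cases m
        · exact ⟨G.mem_edgeSet.mpr (htri j).1, hedgene 0 1⟩
        · exact ⟨G.mem_edgeSet.mpr (htri j).2.1, hedgene 1 2⟩
        · exact ⟨G.mem_edgeSet.mpr (htri j).2.2.symm, hedgene 2 0⟩
    · fin_cases m
      · exact absurd rfl hkm
      · rw [hglast, hglast]
        refine ⟨G.mem_edgeSet.mpr hdv', ?_⟩
        intro he
        rw [Sym2.eq_iff] at he
        rcases he with ⟨ha, -⟩ | ⟨-, ha⟩
        · exact hDmem v hvD i jx ha
        · exact hDmem d hdD i jx ha
      · rw [hglast, hglast]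
        refine ⟨G.mem_edgeSet.mpr hdu'.symm, ?_⟩
        intro he
        rw [Sym2.eq_iff] at he
        rcases he with ⟨ha, -⟩ | ⟨-, ha⟩
        · exact hDmem d hdD i jx ha
        · exact hDmem u huD i jx ha
  have hspecial : c s(g (Fin.last (t + 1)) 0, g (Fin.last (t + 1)) (0 + 1)) =
      c s(f i jx, y) := by
    rw [hglast, hglast]
    exact hTc u huT v hvT huv
  have hkey2 : ∀ (k : Fin (t + 2)) (m : Fin 3),
      ((k, m) : Fin (t + 2) × Fin 3) ≠ (Fin.last (t + 1), (0 : Fin 3)) →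
      c s(g k m, g k (m + 1)) = c s(f i jx, y) → False := by
    intro k m hq hcq
    obtain ⟨hmem, hnee⟩ := hGedge k m hq
    exact hnee (hGrainbow _ hmem _ hxy hcq)
  have hCinj : Function.Injective
      fun q : Fin (t + 2) × Fin 3 => c s(g q.1 q.2, g q.1 (q.2 + 1)) := by
    rintro ⟨k1, m1⟩ ⟨k2, m2⟩ h
    replace h : c s(g k1 m1, g k1 (m1 + 1)) = c s(g k2 m2, g k2 (m2 + 1)) := h
    by_cases e1 : ((k1, m1) : Fin (t + 2) × Fin 3) = (Fin.last (t + 1), (0 : Fin 3)) <;>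
      by_cases e2 : ((k2, m2) : Fin (t + 2) × Fin 3) = (Fin.last (t + 1), (0 : Fin 3))
    · rw [e1, e2]
    · exfalso
      rw [Prod.mk.injEq] at e1
      obtain ⟨rfl, rfl⟩ := e1
      exact hkey2 k2 m2 e2 (h.symm.trans hspecial)
    · exfalso
      rw [Prod.mk.injEq] at e2
      obtain ⟨rfl, rfl⟩ := e2
      exact hkey2 k1 m1 e1 (h.trans hspecial)
    · obtain ⟨hm1, -⟩ := hGedge k1 m1 e1
      obtain ⟨hm2, -⟩ := hGedge k2 m2 e2
      exact edgeInj g hVinj (hGrainbow _ hm1 _ hm2 h)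
  exact hnoRainbow ⟨g, hVinj, hTopAdj, hCinj⟩

/-- Claim 7: in the rainbow-subgraph setup, if `(x,y,z)` is a triangle of `M` and `T ⊆ X`
with `|T| ≥ 4` has all its pairs colored `c(xy)`, then no vertex of `D` is adjacent to
both `x` and `z`, and no vertex of `D` is adjacent to both `y` and `z`. -/
theorem no_friendly_vertex_for_xz_yz (t n : ℕ) (c : Sym2 (Fin n) → ℕ)
    -- the coloring `c` of `K_n` admits no rainbow `(t+2)K₃`
    (hnoRainbow : ¬ RainbowIndepTrianglesIn (⊤ : SimpleGraph (Fin n)) (t + 2) c)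
    -- `G` is a (spanning) rainbow subgraph of `K_n` with one edge of each used color
    (G : SimpleGraph (Fin n))
    (hGrainbow : ∀ e ∈ G.edgeSet, ∀ e' ∈ G.edgeSet, c e = c e' → e = e')
    (hGcolors : ∀ e ∈ (⊤ : SimpleGraph (Fin n)).edgeSet, ∃ e' ∈ G.edgeSet, c e' = c e)
    -- `M` is a family of `t+1` pairwise vertex-disjoint triangles of `G`, given by `f`
    (f : Fin (t + 1) → Fin 3 → Fin n)
    (hinj : Function.Injective fun p : Fin (t + 1) × Fin 3 => f p.1 p.2)
    (htri : ∀ i, G.Adj (f i 0) (f i 1) ∧ G.Adj (f i 1) (f i 2) ∧ G.Adj (f i 0) (f i 2))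
    -- `Dset` is the vertex set of `D`, the induced subgraph on vertices not covered by `M`
    (Dset : Set (Fin n)) (hDset : Dset = {x | ∀ i j, f i j ≠ x})
    -- `X ⊆ V(D)` is independent in `D`, any two of its vertices having
    -- at least `4` common neighbors in `D`
    (X : Set (Fin n)) (hXD : X ⊆ Dset)
    (hXind : ∀ u ∈ X, ∀ v ∈ X, u ≠ v → ¬ G.Adj u v)
    (hXcn : ∀ u ∈ X, ∀ v ∈ X, u ≠ v →
      4 ≤ (G.neighborSet u ∩ G.neighborSet v ∩ Dset).ncard)
    -- `(x, y, z)` is a triangle of `M`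
    (x y z : Fin n) (i : Fin (t + 1)) (σ : Equiv.Perm (Fin 3))
    (hx : x = f i (σ 0)) (hy : y = f i (σ 1)) (hz : z = f i (σ 2))
    -- `T ⊆ X` with `|T| ≥ 4`, all pairs colored `c(xy)`
    (T : Set (Fin n)) (hTX : T ⊆ X) (hTcard : 4 ≤ T.ncard)
    (hTc : ∀ u ∈ T, ∀ v ∈ T, u ≠ v → c s(u, v) = c s(x, y)) :
    ∀ w ∈ Dset, ¬ (G.Adj w x ∧ G.Adj w z) ∧ ¬ (G.Adj w y ∧ G.Adj w z) := by
  intro w hw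
  subst hx; subst hy; subst hz
  have hσ : ∀ a b : Fin 3, a ≠ b → f i (σ a) ≠ f i (σ b) := by
    intro a b hab e
    exact hab (σ.injective (congrArg Prod.snd (@hinj (i, σ a) (i, σ b) e)))
  have hxyE : s(f i (σ 0), f i (σ 1)) ∈ G.edgeSet :=
    G.mem_edgeSet.mpr
      (triAdj (htri i) (σ 0) (σ 1) (fun e => (by decide : (0 : Fin 3) ≠ 1) (σ.injective e)))
  have hwM : ∀ (i' : Fin (t + 1)) (j : Fin 3), w ≠ f i' j := by
    intro i' j; rw [hDset] at hw; exact (hw i' j).symm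
  have hTD : T ⊆ Dset := fun a ha => hXD (hTX ha)
  have hTcn : ∀ u ∈ T, ∀ v ∈ T, u ≠ v →
      4 ≤ (G.neighborSet u ∩ G.neighborSet v ∩ Dset).ncard :=
    fun u hu v hv huv => hXcn u (hTX hu) v (hTX hv) huv
  constructor
  · rintro ⟨hwx, hwz⟩
    refine aux_claim t n c hnoRainbow G hGrainbow f hinj htri Dset hDset i (f i (σ 1)) (σ 0)
      hxyE w (σ 0) (σ 2) (fun e => (by decide : (0 : Fin 3) ≠ 2) (σ.injective e)) hw hwx hwz
      ?_ ?_ ?_ T hTD hTcard hTcn hTc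
    · intro he; rw [Sym2.eq_iff] at he
      rcases he with ⟨h1, -⟩ | ⟨h1, -⟩
      · exact hwM i (σ 0) h1
      · exact hwM i (σ 1) h1
    · intro he; rw [Sym2.eq_iff] at he
      rcases he with ⟨-, h2⟩ | ⟨h1, -⟩
      · exact hσ 2 1 (by decide) h2
      · exact hσ 0 1 (by decide) h1
    · intro he; rw [Sym2.eq_iff] at he
      rcases he with ⟨-, h2⟩ | ⟨-, h2⟩
      · exact hwM i (σ 1) h2
      · exact hwM i (σ 0) h2
  · rintro ⟨hwy, hwz⟩
    refine aux_claim t n c hnoRainbow G hGrainbow f hinj htri Dset hDset i (f i (σ 1)) (σ 0)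
      hxyE w (σ 1) (σ 2) (fun e => (by decide : (1 : Fin 3) ≠ 2) (σ.injective e)) hw hwy hwz
      ?_ ?_ ?_ T hTD hTcard hTcn hTc
    · intro he; rw [Sym2.eq_iff] at he
      rcases he with ⟨h1, -⟩ | ⟨h1, -⟩
      · exact hwM i (σ 0) h1
      · exact hwM i (σ 1) h1
    · intro he; rw [Sym2.eq_iff] at he
      rcases he with ⟨h1, -⟩ | ⟨-, h2⟩
      · exact hσ 1 0 (by decide) h1
      · exact hσ 2 0 (by decide) h2
    · intro he; rw [Sym2.eq_iff] at he
      rcases he with ⟨-, h2⟩ | ⟨-, h2⟩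
      · exact hwM i (σ 1) h2
      · exact hwM i (σ 0) h2
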